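/- arXiv:0907.2060 — 6 statements merged into one kernel-verified Lean document; each statement's English description precedes it below -/
import Mathlib

section
/- Let k be a field of characteristic 2, let p, r, t1, t2 be polynomials in k[x], and let v in k[x] be irreducible with v not dividing r. If v^2 divides p + r*t1 + t1^2 and v^2 divides p + r*t2 + t2^2, then v^2 divides t1 + t2 or v^2 divides r + t1 + t2. -/
open Polynomial

theorem CharTwo.quadratic_add_quadratic_eq_mul {R : Type*} [CommRing R] [CharP R 2]
    (p r a b : R) :
    (p + r * a + a ^ 2) + (p + r * b + b ^ 2) = (a + b) * (r + (a + b)) := by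
  linear_combination (p - a * b) * CharTwo.two_eq_zero (R := R)

theorem Prime.pow_dvd_or_pow_dvd_add_of_pow_dvd_mul {M : Type*} [CommRing M] [IsCancelMulZero M]
    {v r s : M} (hv : Prime v) (hvr : ¬ v ∣ r) {n : ℕ} (h : v ^ n ∣ s * (r + s)) :
    v ^ n ∣ s ∨ v ^ n ∣ r + s := by
  by_cases hs : v ∣ s
  · have hrs : ¬ v ∣ r + s := fun hrs => hvr (by simpa using dvd_sub hrs hs)
    exact Or.inl (hv.pow_dvd_of_dvd_mul_right n hrs h)
  · exact Or.inr (hv.pow_dvd_of_dvd_mul_left n hs h)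

theorem stmt_1 (k : Type*) [Field k] [CharP k 2]
    (p r t1 t2 v : k[X]) (hv : Irreducible v) (hvr : ¬ v ∣ r)
    (h1 : v ^ 2 ∣ p + r * t1 + t1 ^ 2)
    (h2 : v ^ 2 ∣ p + r * t2 + t2 ^ 2) :
    v ^ 2 ∣ t1 + t2 ∨ v ^ 2 ∣ r + t1 + t2 := by
  have hprod : v ^ 2 ∣ (t1 + t2) * (r + (t1 + t2)) := by
    rw [← CharTwo.quadratic_add_quadratic_eq_mul p r t1 t2]
    exact dvd_add h1 h2
  rw [add_assoc r]
  exact hv.prime.pow_dvd_or_pow_dvd_add_of_pow_dvd_mul hvr hprod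
end

section
/- Let q be a power of 2 and k the finite field with q elements, let g >= 2 be an integer, let p, r in k[x], and let v in k[x] be irreducible of degree m with 1 <= m <= g + 2 and v not dividing r. Then the number of polynomials t in k[x] of degree at most g+1 such that v divides p + r*t + t^2 is at most 2*q^(g+2-m). -/
/-!
Modulo the irreducible `v`, a solution `t` reduces to a root of `X² + r̄ X + p̄` over the field
`k[X]/(v)`, so it lies in one of at most two residue classes. Within a residue class, a polynomial
of degree `< g + 2` is determined by its quotient by `v`, which has degree `< g + 2 - m`; this
leaves at most `q ^ (g + 2 - m)` choices per class.
-/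

open Polynomial

theorem Polynomial.natCard_degreeLT (K : Type*) [CommRing K] (n : ℕ) :
    Nat.card (degreeLT K n) = Nat.card K ^ n := by
  rw [Nat.card_congr (degreeLTEquiv K n).toEquiv, Nat.card_fun, Nat.card_fin]

section Field

variable {K : Type*} [Field K]

theorem Polynomial.natDegree_div_le (t v : K[X]) :
    (t / v).natDegree ≤ t.natDegree - v.natDegree := by
  rcases eq_or_ne v 0 with rfl | hv
  · simp
  calc (t / v).natDegree ≤ (t /ₘ (v * C v.leadingCoeff⁻¹)).natDegree := by
        rw [div_def]; exact natDegree_C_mul_le _ _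
    _ = t.natDegree - v.natDegree := by
        rw [natDegree_divByMonic _ (monic_mul_leadingCoeff_inv hv),
          natDegree_mul_leadingCoeff_inv _ hv]

theorem Polynomial.div_mem_degreeLT {v t : K[X]} {n : ℕ} (hv : v ≠ 0)
    (ht : t ∈ degreeLT K n) : t / v ∈ degreeLT K (n - v.natDegree) := by
  rw [mem_degreeLT] at ht ⊢
  rcases eq_or_ne (t / v) 0 with h0 | h0
  · simp [h0]
  have hvt : v.natDegree ≤ t.natDegree :=
    natDegree_le_natDegree (not_lt.1 (mt (Polynomial.div_eq_zero_iff hv).2 h0))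
  have htn : t.natDegree < n := by
    have ht0 : t ≠ 0 := by rintro rfl; simp at h0
    rwa [degree_eq_natDegree ht0, Nat.cast_lt] at ht
  rw [degree_eq_natDegree h0, Nat.cast_lt]
  have := natDegree_div_le t v
  omega

theorem Polynomial.eq_of_dvd_sub_of_div_eq {v t₁ t₂ : K[X]} (hdvd : v ∣ t₁ - t₂)
    (hdiv : t₁ / v = t₂ / v) : t₁ = t₂ := by
  rw [← EuclideanDomain.mod_add_div t₁ v, ← EuclideanDomain.mod_add_div t₂ v,
    mod_eq_of_dvd_sub hdvd, hdiv]

theorem Polynomial.ncard_le_of_mem_degreeLT_of_mk_mem [Finite K] {v : K[X]} (hv : v ≠ 0)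
    (R : Finset (K[X] ⧸ Ideal.span {v})) (n : ℕ) {s : Set K[X]}
    (hs : ∀ t ∈ s, t ∈ degreeLT K n ∧ Ideal.Quotient.mk _ t ∈ R) :
    s.ncard ≤ R.card * Nat.card K ^ (n - v.natDegree) := by
  have : Finite (degreeLT K (n - v.natDegree)) :=
    (degreeLTEquiv K _).toEquiv.finite_iff.mpr inferInstance
  calc s.ncard
      ≤ ((R : Set (K[X] ⧸ Ideal.span {v})) ×ˢ (degreeLT K (n - v.natDegree) : Set K[X])).ncard := by
        refine Set.ncard_le_ncard_of_injOn (fun t ↦ (Ideal.Quotient.mk _ t, t / v))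
          (fun t ht ↦ ⟨(hs t ht).2, div_mem_degreeLT hv (hs t ht).1⟩) ?_
          (R.finite_toSet.prod (Set.toFinite _))
        intro t₁ _ t₂ _ h
        obtain ⟨hmk, hdiv⟩ := Prod.mk.inj h
        refine eq_of_dvd_sub_of_div_eq ?_ hdiv
        rwa [← Ideal.mem_span_singleton, ← Ideal.Quotient.eq]
    _ = R.card * Nat.card K ^ (n - v.natDegree) := by
        rw [Set.ncard_prod, Set.ncard_coe_finset, ← Nat.card_coe_set_eq, SetLike.coe_sort_coe,
          natCard_degreeLT]

end Field

theorem Polynomial.card_roots_toFinset_quadratic_le {F : Type*} [CommRing F] [IsDomain F]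
    [DecidableEq F] (b c : F) : (X ^ 2 + C b * X + C c).roots.toFinset.card ≤ 2 :=
  calc _ ≤ Multiset.card (X ^ 2 + C b * X + C c).roots := Multiset.toFinset_card_le _
    _ ≤ (X ^ 2 + C b * X + C c).natDegree := card_roots' _
    _ ≤ 2 := by compute_degree

theorem Polynomial.monic_quadratic {R : Type*} [CommRing R] (b c : R) :
    (X ^ 2 + C b * X + C c).Monic := by
  monicity!

theorem stmt_2_general (k : Type*) [Field k] [Fintype k] (q : ℕ) (hcard : Fintype.card k = q)
    (g : ℕ)
    (p r v : k[X]) (hv : Irreducible v)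
    (m : ℕ) (hm : v.natDegree = m) :
    Set.ncard {t : k[X] | t.degree ≤ (g + 1 : ℕ) ∧ v ∣ p + r * t + t ^ 2}
      ≤ 2 * q ^ (g + 2 - m) := by
  classical
  have : (Ideal.span {v}).IsMaximal := PrincipalIdealRing.isMaximal_of_irreducible hv
  set φ := Ideal.Quotient.mk (Ideal.span {v})
  set Q : (k[X] ⧸ Ideal.span {v})[X] := X ^ 2 + C (φ r) * X + C (φ p)
  have hQ : ∀ t, v ∣ p + r * t + t ^ 2 → φ t ∈ Q.roots.toFinset := fun t ht ↦ by
    have h0 : φ (p + r * t + t ^ 2) = 0 := (Ideal.Quotient.eq_zero_iff_dvd _ _).2 ht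
    rw [Multiset.mem_toFinset, mem_roots (monic_quadratic _ _).ne_zero, IsRoot, ← h0]
    simp only [map_add, map_mul, map_pow, eval_add, eval_mul, eval_pow, eval_X, eval_C]
    ring
  calc _ ≤ Q.roots.toFinset.card * Nat.card k ^ (g + 2 - v.natDegree) :=
        ncard_le_of_mem_degreeLT_of_mk_mem hv.ne_zero _ (g + 2) fun t ht ↦
          ⟨by rw [degreeLT_succ_eq_degreeLE, mem_degreeLE]; exact ht.1, hQ t ht.2⟩
    _ ≤ 2 * q ^ (g + 2 - m) := by
        rw [Nat.card_eq_fintype_card, hcard, hm]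
        gcongr
        exact card_roots_toFinset_quadratic_le _ _

theorem stmt_2 (k : Type*) [Field k] [Fintype k] (q n : ℕ) (hn : 1 ≤ n)
    (hq : q = 2 ^ n) (hcard : Fintype.card k = q)
    (g : ℕ) (hg : 2 ≤ g)
    (p r v : k[X]) (hv : Irreducible v)
    (m : ℕ) (hm : v.natDegree = m) (hm1 : 1 ≤ m) (hm2 : m ≤ g + 2)
    (hvr : ¬ v ∣ r) :
    Set.ncard {t : k[X] | t.degree ≤ (g + 1 : ℕ) ∧ v ∣ p + r * t + t ^ 2}
      ≤ 2 * q ^ (g + 2 - m) :=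
  stmt_2_general k q hcard g p r v hv m hm
end

section
/- Let q be a power of 2 and k the finite field with q elements, let g >= 2 be an integer, let p, r in k[x], and let v in k[x] be irreducible of degree m with 2*m <= g + 2 and v not dividing r. Then the number of polynomials t in k[x] of degree at most g+1 such that v^2 divides p + r*t + t^2 is at most 2*q^(g+2-2m). -/
/-! In characteristic 2, if `t₀` is one solution then `p_t - p_{t₀} = (t - t₀)(t - t₀ + r)` for
every `t`. As `v` is prime and does not divide `r`, it cannot divide both factors, so `v²`
divides one of them: every solution lies in `t₀ + v² k[x]` or in `t₀ - r + v² k[x]`. A coset of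
`v² k[x]` contains at most `q^(g+2-2m)` polynomials of degree `≤ g + 1`, because two of them
that agree in the coefficients of `x^(2m), …, x^(g+1)` differ by a multiple of `v²` of degree
`< 2m`. -/

open Polynomial

namespace Polynomial

variable {R : Type*} [CommRing R] [IsDomain R]

theorem encard_setOf_degree_le_dvd_sub_le [Fintype R] {d : R[X]} (hd : d ≠ 0) (a : R[X])
    (D : ℕ) :
    {t : R[X] | t.degree ≤ D ∧ d ∣ t - a}.encard ≤ Fintype.card R ^ (D + 1 - d.natDegree) := by
  set e := d.natDegree
  let topCoeffs : R[X] → Fin (D + 1 - e) → R := fun t i => t.coeff (e + i)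
  have hinj : Set.InjOn topCoeffs {t : R[X] | t.degree ≤ D ∧ d ∣ t - a} := by
    rintro t₁ ⟨ht₁, hd₁⟩ t₂ ⟨ht₂, hd₂⟩ hcoeff
    have hdvd : d ∣ t₁ - t₂ := by simpa using dvd_sub hd₁ hd₂
    have hlt : (t₁ - t₂).degree < e := by
      rw [degree_lt_iff_coeff_zero]
      intro j hj
      rw [coeff_sub, sub_eq_zero]
      by_cases hjD : j ≤ D
      · obtain ⟨i, rfl⟩ := Nat.exists_eq_add_of_le hj
        exact congrFun hcoeff ⟨i, by omega⟩
      · rw [coeff_eq_zero_of_degree_lt (ht₁.trans_lt (by exact_mod_cast not_le.mp hjD)),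
          coeff_eq_zero_of_degree_lt (ht₂.trans_lt (by exact_mod_cast not_le.mp hjD))]
    rw [← degree_eq_natDegree hd] at hlt
    exact sub_eq_zero.mp (eq_zero_of_dvd_of_degree_lt hdvd hlt)
  calc _ ≤ (Set.univ : Set (Fin (D + 1 - e) → R)).encard :=
        Set.encard_le_encard_of_injOn (Set.mapsTo_univ _ _) hinj
    _ = _ := by simp [Set.encard_univ]

end Polynomial

theorem sub_eq_mul_of_charTwo {R : Type*} [CommRing R] [CharP R 2] (p r t s : R) :
    (p + r * t + t ^ 2) - (p + r * s + s ^ 2) = (t - s) * (t - s + r) := by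
  linear_combination (s * (t - s)) * CharTwo.two_eq_zero (R := R)

theorem Prime.pow_dvd_or_pow_dvd_add_of_pow_dvd_mul_add {R : Type*} [CommRing R] [IsDomain R] {v r w : R}
    (hv : Prime v) (hvr : ¬ v ∣ r) (n : ℕ) (h : v ^ n ∣ w * (w + r)) :
    v ^ n ∣ w ∨ v ^ n ∣ w + r := by
  by_cases hw : v ∣ w + r
  · refine .inr (hv.pow_dvd_of_dvd_mul_left n (fun hvw => hvr ?_) h)
    simpa using dvd_sub hw hvw
  · exact .inl (hv.pow_dvd_of_dvd_mul_right n hw h)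

theorem stmt_3_general (k : Type*) [Field k] [Fintype k] (q n : ℕ)
    (hq : q = 2 ^ n) (hcard : Fintype.card k = q)
    (g : ℕ)
    (p r v : k[X]) (hv : Irreducible v)
    (m : ℕ) (hm : v.natDegree = m)
    (hvr : ¬ v ∣ r) :
    Set.ncard {t : k[X] | t.degree ≤ (g + 1 : ℕ) ∧ v ^ 2 ∣ p + r * t + t ^ 2}
      ≤ 2 * q ^ (g + 2 - 2 * m) := by
  set S := {t : k[X] | t.degree ≤ (g + 1 : ℕ) ∧ v ^ 2 ∣ p + r * t + t ^ 2}
  rcases S.eq_empty_or_nonempty with hS | ⟨t₀, -, ht₀⟩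
  · simp [hS]
  have : CharP k 2 := charP_of_card_eq_prime_pow (hcard.trans hq)
  have hv2 : v ^ 2 ≠ 0 := pow_ne_zero 2 hv.ne_zero
  have hdeg : (v ^ 2).natDegree = 2 * m := by rw [natDegree_pow, hm]
  have hcoset (a : k[X]) :
      {t : k[X] | t.degree ≤ (g + 1 : ℕ) ∧ v ^ 2 ∣ t - a}.encard ≤ q ^ (g + 2 - 2 * m) := by
    simpa [hdeg, hcard] using encard_setOf_degree_le_dvd_sub_le hv2 a (g + 1)
  have hsub : S ⊆ {t | t.degree ≤ (g + 1 : ℕ) ∧ v ^ 2 ∣ t - t₀} ∪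
      {t | t.degree ≤ (g + 1 : ℕ) ∧ v ^ 2 ∣ t - (t₀ - r)} := by
    rintro t ⟨ht, hdvd⟩
    have hprod : v ^ 2 ∣ (t - t₀) * (t - t₀ + r) := by
      rw [← sub_eq_mul_of_charTwo p r t t₀]
      exact dvd_sub hdvd ht₀
    rcases hv.prime.pow_dvd_or_pow_dvd_add_of_pow_dvd_mul_add hvr 2 hprod with h | h
    · exact .inl ⟨ht, h⟩
    · exact .inr ⟨ht, by rwa [sub_sub_eq_add_sub, add_sub_right_comm]⟩
  have hS : S.encard ≤ (2 * q ^ (g + 2 - 2 * m) : ℕ) := calc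
    S.encard ≤ _ := Set.encard_le_encard hsub
    _ ≤ _ := Set.encard_union_le _ _
    _ ≤ q ^ (g + 2 - 2 * m) + q ^ (g + 2 - 2 * m) := add_le_add (hcoset _) (hcoset _)
    _ = _ := by push_cast; ring
  exact (Set.encard_le_coe_iff_finite_ncard_le.mp hS).2

theorem stmt_3 (k : Type*) [Field k] [Fintype k] (q n : ℕ) (hn : 1 ≤ n)
    (hq : q = 2 ^ n) (hcard : Fintype.card k = q)
    (g : ℕ) (hg : 2 ≤ g)
    (p r v : k[X]) (hv : Irreducible v)
    (m : ℕ) (hm : v.natDegree = m) (hm2 : 2 * m ≤ g + 2)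
    (hvr : ¬ v ∣ r) :
    Set.ncard {t : k[X] | t.degree ≤ (g + 1 : ℕ) ∧ v ^ 2 ∣ p + r * t + t ^ 2}
      ≤ 2 * q ^ (g + 2 - 2 * m) :=
  stmt_3_general k q n hq hcard g p r v hv m hm hvr
end

section
/- Let q be a power of 2 and k the finite field with q elements, let g >= 2 be an integer, let p, r in k[x], and let v in k[x] be irreducible of degree m with 1 <= m <= g + 2 and v dividing r. Then the number of polynomials t in k[x] of degree at most g+1 such that v^2 divides p + r*t + t^2 is at most q^(g+2-m). -/
/-! In characteristic 2 the difference `p_t - p_s` equals `r (t - s) + (t - s)^2`, so if the prime `v`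
divides `r`, `p_t` and `p_s`, it divides `(t - s)^2` and hence `t - s`. All solutions `t` therefore
lie in one residue class modulo `v`, on which `t ↦ t / v` is injective; it sends polynomials of
degree at most `g + 1` to polynomials of degree less than `g + 2 - m`, of which there are
`q ^ (g + 2 - m)`. -/

open Polynomial

theorem Prime.dvd_sub_of_dvd_add_mul_add_sq {R : Type*} [CommRing R] [CharP R 2] {v p r t s : R}
    (hv : Prime v) (hvr : v ∣ r) (ht : v ∣ p + r * t + t ^ 2) (hs : v ∣ p + r * s + s ^ 2) :
    v ∣ t - s := by
  have hdiff : p + r * t + t ^ 2 - (p + r * s + s ^ 2) - r * (t - s) = (t - s) ^ 2 := by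
    linear_combination (s * (t - s)) * CharTwo.two_eq_zero (R := R)
  exact hv.dvd_of_dvd_pow (hdiff ▸ dvd_sub (dvd_sub ht hs) (dvd_mul_of_dvd_left hvr _))

namespace Polynomial

variable {K : Type*} [Field K]

theorem nat_card_degreeLT (n : ℕ) : Nat.card (degreeLT K n) = Nat.card K ^ n := by
  rw [Nat.card_congr (degreeLTEquiv K n).toEquiv, Nat.card_fun, Nat.card_fin]

theorem degree_div_lt_of_degree_le {t v : K[X]} (hv : v ≠ 0) {d : ℕ} (ht : t.degree ≤ d) :
    (t / v).degree < (d + 1 - v.natDegree : ℕ) := by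
  by_cases htv : t / v = 0
  · simp [htv]
  have hvt : v.degree ≤ t.degree := not_lt.mp ((Polynomial.div_eq_zero_iff hv).not.mp htv)
  have ht0 : t ≠ 0 := by rintro rfl; simp at htv
  have hsum : v.natDegree + (t / v).natDegree = t.natDegree := by
    have := degree_add_div hv hvt
    rw [degree_eq_natDegree hv, degree_eq_natDegree htv, degree_eq_natDegree ht0] at this
    exact_mod_cast this
  rw [degree_eq_natDegree ht0, Nat.cast_le] at ht
  rw [degree_eq_natDegree htv, Nat.cast_lt]
  omega

theorem div_injOn_of_dvd_sub {S : Set K[X]} {v : K[X]} (hS : ∀ t ∈ S, ∀ s ∈ S, v ∣ t - s) :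
    S.InjOn (· / v) := by
  intro t ht s hs hts
  have hmod : t % v = s % v := by
    rw [← sub_eq_zero, ← sub_mod]
    exact EuclideanDomain.mod_eq_zero.mpr (hS t ht s hs)
  rw [← EuclideanDomain.div_add_mod t v, ← EuclideanDomain.div_add_mod s v]
  simp only at hts
  rw [hts, hmod]

theorem ncard_le_of_degree_le_of_dvd_sub [Finite K] {S : Set K[X]} {v : K[X]} (hv : v ≠ 0)
    {d : ℕ} (hdeg : ∀ t ∈ S, t.degree ≤ d) (hS : ∀ t ∈ S, ∀ s ∈ S, v ∣ t - s) :
    S.ncard ≤ Nat.card K ^ (d + 1 - v.natDegree) := by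
  have : Finite (degreeLT K (d + 1 - v.natDegree)) :=
    Finite.of_equiv _ (degreeLTEquiv K _).toEquiv.symm
  rw [← nat_card_degreeLT, ← Nat.card_coe_set_eq]
  refine Nat.card_le_card_of_injective
    (fun t => ⟨t.1 / v, mem_degreeLT.mpr (degree_div_lt_of_degree_le hv (hdeg t.1 t.2))⟩) ?_
  intro t s hts
  exact Subtype.ext (div_injOn_of_dvd_sub hS t.2 s.2 (congrArg Subtype.val hts))

end Polynomial

theorem stmt_4_general (k : Type*) [Field k] [Fintype k] (q n : ℕ)
    (hq : q = 2 ^ n) (hcard : Fintype.card k = q)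
    (g : ℕ)
    (p r v : k[X]) (hv : Irreducible v)
    (m : ℕ) (hm : v.natDegree = m)
    (hvr : v ∣ r) :
    Set.ncard {t : k[X] | t.degree ≤ (g + 1 : ℕ) ∧ v ^ 2 ∣ p + r * t + t ^ 2}
      ≤ q ^ (g + 2 - m) := by
  have : CharP k[X] 2 := by
    have : CharP k 2 := charP_of_card_eq_prime_pow (hcard.trans hq)
    infer_instance
  rw [← hm, ← hcard, ← Nat.card_eq_fintype_card]
  exact ncard_le_of_degree_le_of_dvd_sub hv.ne_zero (fun t ht => ht.1) fun t ht s hs =>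
    hv.prime.dvd_sub_of_dvd_add_mul_add_sq hvr
      ((dvd_pow_self v two_ne_zero).trans ht.2) ((dvd_pow_self v two_ne_zero).trans hs.2)

theorem stmt_4 (k : Type*) [Field k] [Fintype k] (q n : ℕ) (hn : 1 ≤ n)
    (hq : q = 2 ^ n) (hcard : Fintype.card k = q)
    (g : ℕ) (hg : 2 ≤ g)
    (p r v : k[X]) (hv : Irreducible v)
    (m : ℕ) (hm : v.natDegree = m) (hm1 : 1 ≤ m) (hm2 : m ≤ g + 2)
    (hvr : v ∣ r) :
    Set.ncard {t : k[X] | t.degree ≤ (g + 1 : ℕ) ∧ v ^ 2 ∣ p + r * t + t ^ 2}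
      ≤ q ^ (g + 2 - m) :=
  stmt_4_general k q n hq hcard g p r v hv m hm hvr
end

section
/- Let k be a finite field with q elements and let S be a set of two-dimensional linear subspaces of k^3 with cardinality strictly less than q^2. Then there exist two-dimensional linear subspaces W1, W2, W3 of k^3, none belonging to S, whose intersection W1 ∩ W2 ∩ W3 is the zero subspace. -/
/-!
The hyperplanes of `k^n` not containing a fixed vector `v ≠ 0` are the kernels of the functionals
`f` with `f v = 1`, and there are `q^(n-1)` of those: they form a translate of the kernel of
evaluation at `v`. So a set `S` of fewer than `q^(n-1)` hyperplanes misses one of them, and every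
nonzero subspace `U` can be cut down to `U ⊓ W` of smaller dimension by a hyperplane `W ∉ S`.
Three such cuts, starting from `k^3`, leave the zero subspace.
-/

open Module

section

variable {k V : Type*} [Field k] [AddCommGroup V] [Module k V]

lemma Module.Dual.ncard_setOf_apply_eq_one [Finite k] [FiniteDimensional k V] {φ : Dual k V}
    (hφ : φ ≠ 0) : {w | φ w = 1}.ncard = Nat.card k ^ (finrank k V - 1) := by
  obtain ⟨w₀, hw₀⟩ := LinearMap.surjective hφ 1
  have hfiber : {w | φ w = 1} = (w₀ + ·) '' (LinearMap.ker φ : Set V) := by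
    ext w
    refine ⟨fun hw => ⟨w - w₀, by simp_all, by simp⟩, ?_⟩
    rintro ⟨x, hx, rfl⟩
    simp_all
  rw [hfiber, Set.ncard_image_of_injective _ (add_right_injective w₀), ← Nat.card_coe_set_eq,
    SetLike.coe_sort_coe, natCard_eq_pow_finrank (K := k),
    ← Dual.finrank_ker_add_one_of_ne_zero hφ, Nat.add_sub_cancel]

theorem exists_hyperplane_notMem_of_ncard_lt [Finite k] [FiniteDimensional k V]
    {S : Set (Submodule k V)} (hS : S.ncard < Nat.card k ^ (finrank k V - 1)) {v : V}
    (hv : v ≠ 0) :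
    ∃ W : Submodule k V, finrank k W = finrank k V - 1 ∧ W ∉ S ∧ v ∉ W := by
  have : Finite V := Module.finite_of_finite k
  have : Finite (Submodule k V) := Finite.of_injective _ SetLike.coe_injective
  have hkerOn : Set.InjOn LinearMap.ker {f : Dual k V | f v = 1} := fun f hf g hg hfg =>
    Dual.eq_of_ker_eq_of_apply_eq v hfg (hf.trans hg.symm) (hf ▸ one_ne_zero)
  have hcount : {f : Dual k V | f v = 1}.ncard = Nat.card k ^ (finrank k V - 1) := by
    rw [← Subspace.dual_finrank_eq]
    exact Dual.ncard_setOf_apply_eq_one ((eval_apply_eq_zero_iff k v).not.2 hv)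
  have hcard : S.ncard < (LinearMap.ker '' {f : Dual k V | f v = 1}).ncard := by
    rwa [hkerOn.ncard_image, hcount]
  obtain ⟨_, ⟨f, hf : f v = 1, rfl⟩, hfS⟩ := Set.exists_mem_notMem_of_ncard_lt_ncard hcard
  have hf0 : f ≠ 0 := fun h => by simp [h] at hf
  have hrank := Dual.finrank_ker_add_one_of_ne_zero hf0
  exact ⟨_, by omega, hfS, by simp [hf]⟩

theorem exists_hyperplane_notMem_finrank_inf_le [Finite k] [FiniteDimensional k V] [Nontrivial V]
    {S : Set (Submodule k V)} (hS : S.ncard < Nat.card k ^ (finrank k V - 1))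
    (U : Submodule k V) :
    ∃ W : Submodule k V, finrank k W = finrank k V - 1 ∧ W ∉ S ∧
      finrank k ↥(U ⊓ W) ≤ finrank k U - 1 := by
  rcases eq_or_ne U ⊥ with rfl | hU
  · obtain ⟨v, hv⟩ := exists_ne (0 : V)
    obtain ⟨W, hW, hWS, -⟩ := exists_hyperplane_notMem_of_ncard_lt hS hv
    exact ⟨W, hW, hWS, by simp⟩
  · obtain ⟨v, hvU, hv⟩ := U.exists_mem_ne_zero_of_ne_bot hU
    obtain ⟨W, hW, hWS, hvW⟩ := exists_hyperplane_notMem_of_ncard_lt hS hv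
    have hlt : finrank k ↥(U ⊓ W) < finrank k U :=
      Submodule.finrank_lt_finrank_of_lt (inf_lt_left.2 fun hUW => hvW (hUW hvU))
    exact ⟨W, hW, hWS, by omega⟩

end

theorem stmt_7_general (k : Type*) [Field k] [Fintype k] (q : ℕ) (hq : Fintype.card k = q)
    (S : Set (Submodule k (Fin 3 → k)))
    (hScard : S.ncard < q ^ 2) :
    ∃ W1 W2 W3 : Submodule k (Fin 3 → k),
      Module.finrank k W1 = 2 ∧ Module.finrank k W2 = 2 ∧ Module.finrank k W3 = 2 ∧
      W1 ∉ S ∧ W2 ∉ S ∧ W3 ∉ S ∧ W1 ⊓ W2 ⊓ W3 = ⊥ := by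
  have hS : S.ncard < Nat.card k ^ (finrank k (Fin 3 → k) - 1) := by
    simpa [Nat.card_eq_fintype_card, hq] using hScard
  obtain ⟨W1, hW1, hW1S, -⟩ := exists_hyperplane_notMem_finrank_inf_le hS ⊥
  obtain ⟨W2, hW2, hW2S, h12⟩ := exists_hyperplane_notMem_finrank_inf_le hS W1
  obtain ⟨W3, hW3, hW3S, h123⟩ := exists_hyperplane_notMem_finrank_inf_le hS (W1 ⊓ W2)
  simp only [finrank_fin_fun] at hW1 hW2 hW3
  refine ⟨W1, W2, W3, hW1, hW2, hW3, hW1S, hW2S, hW3S, ?_⟩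
  rw [← Submodule.finrank_eq_zero (R := k)]
  omega

theorem stmt_7 (k : Type*) [Field k] [Fintype k] (q : ℕ) (hq : Fintype.card k = q)
    (S : Set (Submodule k (Fin 3 → k)))
    (hS2 : ∀ W ∈ S, Module.finrank k W = 2)
    (hScard : S.ncard < q ^ 2) :
    ∃ W1 W2 W3 : Submodule k (Fin 3 → k),
      Module.finrank k W1 = 2 ∧ Module.finrank k W2 = 2 ∧ Module.finrank k W3 = 2 ∧
      W1 ∉ S ∧ W2 ∉ S ∧ W3 ∉ S ∧ W1 ⊓ W2 ⊓ W3 = ⊥ :=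
  stmt_7_general k q hq S hScard
end

section
/- Let F2(X,Y,Z) = (X+Y)^4 + X^2*Y^2 + X*Y*Z*(X+Y+Z) + Z^2*(X+Y+Z)^2 in F_2[X,Y,Z]. For every invertible 3-by-3 matrix A over F_2, the polynomial obtained from F2 by the linear substitution (X,Y,Z) -> A*(X,Y,Z) is equal to F2. In other words, F2 is invariant under the full group GL_3(F_2). -/
/-!
Substitution by a matrix is an anti-homomorphism from matrices to algebra endomorphisms, so the
matrices fixing a polynomial form a submonoid. Every invertible matrix over a field is a product
of transvections and a diagonal matrix; over `𝔽₂` the diagonal factor is `1` and the only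
nontrivial transvections are the six substitutions `X i ↦ X i + X j`, under which `F2` is checked
to be invariant by expanding and reducing coefficients mod 2.
-/

open MvPolynomial

/-- The plane quartic `F2` over `𝔽₂`, in variables `X 0, X 1, X 2`. -/
noncomputable def F2poly : MvPolynomial (Fin 3) (ZMod 2) :=
  (X 0 + X 1) ^ 4 + (X 0) ^ 2 * (X 1) ^ 2
    + X 0 * X 1 * X 2 * (X 0 + X 1 + X 2)
    + (X 2) ^ 2 * (X 0 + X 1 + X 2) ^ 2

namespace MvPolynomial

variable {σ R : Type*} [Fintype σ]

section CommSemiring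

variable [CommSemiring R]

noncomputable def linearSubst (A : Matrix σ σ R) : MvPolynomial σ R →ₐ[R] MvPolynomial σ R :=
  aeval fun i => ∑ j, C (A i j) * X j

theorem linearSubst_X (A : Matrix σ σ R) (i : σ) :
    linearSubst A (X i) = ∑ j, C (A i j) * X j :=
  aeval_X _ _

theorem linearSubst_one [DecidableEq σ] : linearSubst (1 : Matrix σ σ R) = AlgHom.id R _ := by
  ext i
  simp [linearSubst_X, Matrix.one_apply]

theorem linearSubst_mul (M N : Matrix σ σ R) :
    linearSubst (M * N) = (linearSubst N).comp (linearSubst M) := by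
  refine algHom_ext fun i => ?_
  simp only [linearSubst_X, AlgHom.comp_apply, map_sum, map_mul, algHom_C, algebraMap_eq,
    Matrix.mul_apply, Finset.sum_mul, Finset.mul_sum, mul_assoc]
  exact Finset.sum_comm

def linearSubstStabilizer [DecidableEq σ] (p : MvPolynomial σ R) : Submonoid (Matrix σ σ R) where
  carrier := {A | linearSubst A p = p}
  one_mem' := by simp [linearSubst_one]
  mul_mem' {M N} hM hN := by
    simp only [Set.mem_ofPred_eq, linearSubst_mul, AlgHom.comp_apply] at *
    rw [hM, hN]

theorem mem_linearSubstStabilizer [DecidableEq σ] {p : MvPolynomial σ R} {A : Matrix σ σ R} :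
    A ∈ linearSubstStabilizer p ↔ linearSubst A p = p :=
  Iff.rfl

end CommSemiring

theorem linearSubst_transvection_X [CommRing R] [DecidableEq σ] (i j k : σ) (c : R) :
    linearSubst (Matrix.transvection i j c) (X k) = X k + if k = i then C c * X j else 0 := by
  rcases eq_or_ne k i with rfl | hki
  · simp [linearSubst_X, Matrix.transvection, Matrix.one_apply, Matrix.single_apply, add_mul,
      Finset.sum_add_distrib, apply_ite C]
  · simp [linearSubst_X, Matrix.transvection, Matrix.one_apply, hki.symm, hki]

end MvPolynomial

theorem Matrix.diagonal_eq_one_of_isUnit_det {n R : Type*} [Fintype n] [DecidableEq n]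
    [CommRing R] [Subsingleton Rˣ] {D : n → R} (hD : IsUnit (diagonal D).det) :
    diagonal D = 1 := by
  rw [← diagonal_one]
  congr 1
  funext i
  rw [det_diagonal] at hD
  exact (isUnit_of_dvd_unit (Finset.dvd_prod_of_mem D (Finset.mem_univ i)) hD).eq_one

theorem transvection_mem_linearSubstStabilizer_F2poly {i j : Fin 3} (hij : i ≠ j) :
    Matrix.transvection i j 1 ∈ linearSubstStabilizer F2poly := by
  -- `reduce_mod_char!` finds the characteristic of `MvPolynomial` only from a local hypothesis.
  have : CharP (MvPolynomial (Fin 3) (ZMod 2)) 2 := inferInstance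
  rw [mem_linearSubstStabilizer]
  fin_cases i <;> fin_cases j <;> first
    | exact absurd rfl hij
    | simp only [F2poly, map_add, map_mul, map_pow, linearSubst_transvection_X, Fin.isValue,
        Fin.zero_eta, Fin.mk_one, Fin.reduceFinMk, Fin.reduceEq, ↓reduceIte, C_1, one_mul, add_zero]
      ring_nf
      reduce_mod_char!

theorem stmt_12 (A : Matrix (Fin 3) (Fin 3) (ZMod 2)) (hA : IsUnit A.det) :
    (aeval fun i => ∑ j, C (A i j) * X j : MvPolynomial (Fin 3) (ZMod 2) →ₐ[ZMod 2]
      MvPolynomial (Fin 3) (ZMod 2)) F2poly = F2poly := by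
  show A ∈ linearSubstStabilizer F2poly
  refine Matrix.diagonal_transvection_induction (· ∈ linearSubstStabilizer F2poly) A
    (fun D hD => ?_) (fun ⟨i, j, hij, c⟩ => ?_) (fun _ _ => (linearSubstStabilizer F2poly).mul_mem)
  · rw [Matrix.diagonal_eq_one_of_isUnit_det (hD ▸ hA)]
    exact (linearSubstStabilizer F2poly).one_mem
  · rw [Matrix.TransvectionStruct.toMatrix_mk]
    rcases eq_or_ne c 0 with rfl | hc
    · rw [Matrix.transvection_zero]
      exact (linearSubstStabilizer F2poly).one_mem
    · rw [hc.isUnit.eq_one]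
      exact transvection_mem_linearSubstStabilizer_F2poly hij
end
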